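/- arXiv:1808.08293 — 3 statements merged into one kernel-verified Lean document; each statement's English description precedes it below -/
import Mathlib

section
/- Let ε, η > 0 and let (x, y) : [−1, ∞) → ℝ² be a C¹ solution on [0,∞) of the delay system ε·x′(t) = −x(t) − y(t) + f(x(t−1)), y′(t) = η·x(t), with f bounded on the range of x. If there exists t₀ ≥ 0 and c₀ > 0 such that x(t) ≥ c₀ for all t ≥ t₀, then a contradiction follows; hence x cannot stay uniformly bounded away from zero from above (analogously from below). Consequently, if x does not converge to 0 and x is bounded with f bounded on its range, then x has a zero in (0, ∞). -/
/-!
If `x ≥ c₀ > 0` from `t₀` on, then `y' = η x ≥ η c₀` makes `y` tend to `+∞`. Once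
`y ≥ M + ε - c₀`, the first equation gives `ε x' = -x - y + f(x(t - 1)) ≤ -c₀ - y + M ≤ -ε`,
so `x' ≤ -1` and `x` tends to `-∞`, contradicting `x ≥ c₀`.
-/

open Filter Set

theorem mul_sub_le_sub_of_hasDerivAt_ge {g g' : ℝ → ℝ} {a m : ℝ}
    (hg : ∀ t ≥ a, HasDerivAt g (g' t) t) (hm : ∀ t ≥ a, m ≤ g' t) {t : ℝ} (ht : a ≤ t) :
    m * (t - a) ≤ g t - g a := by
  have hmono : MonotoneOn (fun s => g s - s * m) (Ici a) := by
    refine monotoneOn_of_hasDerivWithinAt_nonneg (f' := fun s => g' s - m) (convex_Ici a)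
      (fun s hs => ((hg s hs).sub (hasDerivAt_mul_const m)).continuousAt.continuousWithinAt)
      (fun s hs => ?_) (fun s hs => ?_)
    · rw [interior_Ici] at hs
      exact ((hg s (hs.le)).sub (hasDerivAt_mul_const m)).hasDerivWithinAt
    · rw [interior_Ici] at hs
      exact sub_nonneg.mpr (hm s (hs.le))
  linarith [hmono self_mem_Ici ht ht]

theorem tendsto_atTop_of_hasDerivAt_ge {g g' : ℝ → ℝ} {a m : ℝ} (hm₀ : 0 < m)
    (hg : ∀ t ≥ a, HasDerivAt g (g' t) t) (hm : ∀ t ≥ a, m ≤ g' t) :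
    Tendsto g atTop atTop := by
  have hlin : Tendsto (fun t => g a + m * (t - a)) atTop atTop :=
    tendsto_atTop_add_const_left _ _
      ((tendsto_atTop_add_const_right _ _ tendsto_id).const_mul_atTop hm₀)
  refine tendsto_atTop_mono' _ ?_ hlin
  filter_upwards [eventually_ge_atTop a] with t ht
  linarith [mul_sub_le_sub_of_hasDerivAt_ge hg hm ht]

theorem tendsto_atBot_of_hasDerivAt_le {g g' : ℝ → ℝ} {a m : ℝ} (hm₀ : m < 0)
    (hg : ∀ t ≥ a, HasDerivAt g (g' t) t) (hm : ∀ t ≥ a, g' t ≤ m) :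
    Tendsto g atTop atBot :=
  tendsto_neg_atTop_iff.mp <| tendsto_atTop_of_hasDerivAt_ge (neg_pos.mpr hm₀)
    (fun t ht => (hg t ht).neg) (fun t ht => neg_le_neg (hm t ht))

theorem stmt_2_general (ε η M c₀ t₀ : ℝ) (f x y : ℝ → ℝ)
    (hε : 0 < ε) (hη : 0 < η)
    (hx : ∀ t ≥ (0:ℝ), HasDerivAt x ((-x t - y t + f (x (t - 1))) / ε) t)
    (hy : ∀ t ≥ (0:ℝ), HasDerivAt y (η * x t) t)
    (hfb : ∀ t ≥ (-1:ℝ), |f (x t)| ≤ M)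
    (ht₀ : 0 ≤ t₀) (hc₀ : 0 < c₀)
    (hlow : ∀ t ≥ t₀, c₀ ≤ x t) :
    False := by
  have hy_top : Tendsto y atTop atTop :=
    tendsto_atTop_of_hasDerivAt_ge (mul_pos hη hc₀) (fun t ht => hy t (ht₀.trans ht))
      (fun t ht => mul_le_mul_of_nonneg_left (hlow t ht) hη.le)
  obtain ⟨t₁, ht₁⟩ := eventually_atTop.mp
    ((hy_top.eventually_ge_atTop (M + ε - c₀)).and (eventually_ge_atTop t₀))
  have hx_bot : Tendsto x atTop atBot := by
    refine tendsto_atBot_of_hasDerivAt_le neg_one_lt_zero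
      (fun t ht => hx t (ht₀.trans (ht₁ t ht).2)) (fun t ht => ?_)
    obtain ⟨hyt, ht₀t⟩ := ht₁ t ht
    have hf : f (x (t - 1)) ≤ M := (abs_le.mp (hfb (t - 1) (by linarith))).2
    rw [div_le_iff₀ hε]
    linarith [hlow t ht₀t]
  obtain ⟨t, hxt, hct⟩ :=
    ((hx_bot.eventually_lt_atBot c₀).and (eventually_ge_atTop t₀)).exists
  exact hxt.not_ge (hlow t hct)

theorem stmt_2 (ε η M c₀ t₀ : ℝ) (f x y : ℝ → ℝ)
    (hε : 0 < ε) (hη : 0 < η) (hM : 0 < M)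
    (hxc : Continuous x)
    (hx : ∀ t ≥ (0:ℝ), HasDerivAt x ((-x t - y t + f (x (t - 1))) / ε) t)
    (hy : ∀ t ≥ (0:ℝ), HasDerivAt y (η * x t) t)
    (hyint : ∀ t ≥ (0:ℝ), y t = y 0 + η * ∫ s in (0:ℝ)..t, x s)
    (hfb : ∀ t ≥ (-1:ℝ), |f (x t)| ≤ M)
    (ht₀ : 0 ≤ t₀) (hc₀ : 0 < c₀)
    (hlow : ∀ t ≥ t₀, c₀ ≤ x t) :
    False :=
  stmt_2_general ε η M c₀ t₀ f x y hε hη hx hy hfb ht₀ hc₀ hlow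
end

section
/- With L as defined before (Lemma on L), the map Lφ satisfies the ordinary differential equation d/dθ (Lφ)(θ) = A⁰(Lφ)(θ) + φ′(θ) − Aᵠφ(θ), where Aᵠ = [[−1/ε, −1/ε],[η, 0]] and A⁰ = [[−1/ε, −1/ε],[0, 0]], with initial condition (Lφ)(−T) = φ(−T). Consequently L is injective on C¹([−T, 0], ℝ²). -/
/-!
Factoring the kernel as `exp (-(θ - s) / ε) = exp (-θ / ε) * exp (s / ε)` shows that
`K θ = ∫_{a}^{θ} exp (-(θ - s) / ε) P s ds` solves `K' = P - K / ε`; with `P = ∫ φ¹` this gives the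
ODE for `Lφ`. For injectivity, the difference `u` of two preimages of the first component satisfies
`u = -(η / ε) K` with `P = U := ∫ u`, so `(U, K)` solves a linear ODE with zero initial value and
vanishes by Grönwall's inequality; then `u = 0`, and the second components agree as well.
-/

open MeasureTheory Set

theorem ContinuousOn.exists_continuous_eqOn_Icc {a b : ℝ} (hab : a ≤ b) {f : ℝ → ℝ}
    (hf : ContinuousOn f (Icc a b)) : ∃ g : ℝ → ℝ, Continuous g ∧ EqOn g f (Icc a b) :=
  ⟨IccExtend hab ((Icc a b).domRestrict f), hf.domRestrict.Icc_extend',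
    fun _ hx => IccExtend_of_mem hab _ hx⟩

section Primitive

variable {a b θ : ℝ} {f g : ℝ → ℝ}

theorem intervalIntegral_eq_of_eqOn_Icc (h : EqOn f g (Icc a b)) (hθ : θ ∈ Icc a b) :
    ∫ s in a..θ, f s = ∫ s in a..θ, g s :=
  intervalIntegral.integral_congr fun _ hs =>
    h (Icc_subset_Icc_right hθ.2 (uIcc_of_le hθ.1 ▸ hs))

theorem hasDerivWithinAt_intervalIntegral_of_continuousOn (hf : ContinuousOn f (Icc a b))
    (hθ : θ ∈ Icc a b) :
    HasDerivWithinAt (fun t => ∫ s in a..t, f s) (f θ) (Icc a b) θ := by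
  obtain ⟨g, hg, hgf⟩ := hf.exists_continuous_eqOn_Icc (hθ.1.trans hθ.2)
  rw [← hgf hθ]
  exact (hg.integral_hasStrictDerivAt a θ).hasDerivAt.hasDerivWithinAt.congr
    (fun t ht => intervalIntegral_eq_of_eqOn_Icc hgf.symm ht)
    (intervalIntegral_eq_of_eqOn_Icc hgf.symm hθ)

end Primitive

noncomputable def expConv (ε a : ℝ) (P : ℝ → ℝ) (θ : ℝ) : ℝ :=
  ∫ s in a..θ, Real.exp (-(θ - s) / ε) * P s

namespace expConv

variable {ε a b θ : ℝ} {P Q : ℝ → ℝ}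

theorem eq_exp_mul (ε a : ℝ) (P : ℝ → ℝ) (θ : ℝ) :
    expConv ε a P θ = Real.exp (-θ / ε) * ∫ s in a..θ, Real.exp (s / ε) * P s := by
  rw [expConv, ← intervalIntegral.integral_const_mul]
  congr 1 with s
  rw [show -(θ - s) / ε = -θ / ε + s / ε by ring, Real.exp_add, mul_assoc]

theorem hasDerivAt (hP : Continuous P) (a θ : ℝ) :
    HasDerivAt (expConv ε a P) (P θ - expConv ε a P θ / ε) θ := by
  have hexp : HasDerivAt (fun t => Real.exp (-t / ε)) (Real.exp (-θ / ε) * (-1 / ε)) θ := by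
    simpa using ((hasDerivAt_id θ).neg.div_const ε).exp
  have hint : Continuous fun s => Real.exp (s / ε) * P s := by fun_prop
  rw [funext (eq_exp_mul ε a P)]
  refine (hexp.mul (hint.integral_hasStrictDerivAt a θ).hasDerivAt).congr_deriv ?_
  dsimp only
  rw [← mul_assoc, ← Real.exp_add, neg_div, neg_add_cancel, Real.exp_zero]
  ring

theorem congr (h : EqOn P Q (Icc a b)) (hθ : θ ∈ Icc a b) :
    expConv ε a P θ = expConv ε a Q θ :=
  intervalIntegral_eq_of_eqOn_Icc (fun s hs => by simp only [h hs]) hθ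

theorem sub (hP : Continuous P) (hQ : Continuous Q) :
    expConv ε a (fun s => P s - Q s) θ = expConv ε a P θ - expConv ε a Q θ := by
  have hkP : Continuous fun s => Real.exp (-(θ - s) / ε) * P s := by fun_prop
  have hkQ : Continuous fun s => Real.exp (-(θ - s) / ε) * Q s := by fun_prop
  simp only [expConv, mul_sub]
  exact intervalIntegral.integral_sub (hkP.intervalIntegrable _ _) (hkQ.intervalIntegrable _ _)

end expConv

theorem Continuous.continuous_intervalIntegral {f : ℝ → ℝ} (hf : Continuous f) (a : ℝ) :
    Continuous fun t => ∫ s in a..t, f s :=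
  intervalIntegral.continuous_primitive hf.intervalIntegrable a

noncomputable def volterraOp (ε η a : ℝ) (f : ℝ → ℝ) (θ : ℝ) : ℝ :=
  f θ + η * ((1 / ε) * expConv ε a (fun s => ∫ σ in a..s, f σ) θ)

namespace volterraOp

variable {ε η a b θ : ℝ} {f g u : ℝ → ℝ}

theorem congr (h : EqOn f g (Icc a b)) (hθ : θ ∈ Icc a b) :
    volterraOp ε η a f θ = volterraOp ε η a g θ := by
  rw [volterraOp, volterraOp, h hθ,
    expConv.congr (fun _ hs => intervalIntegral_eq_of_eqOn_Icc h hs) hθ]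

theorem sub (hf : Continuous f) (hg : Continuous g) :
    volterraOp ε η a (fun s => f s - g s) θ = volterraOp ε η a f θ - volterraOp ε η a g θ := by
  have hprim : ∀ t, ∫ s in a..t, (f s - g s) = (∫ s in a..t, f s) - ∫ s in a..t, g s :=
    fun _ => intervalIntegral.integral_sub (hf.intervalIntegrable _ _) (hg.intervalIntegrable _ _)
  simp only [volterraOp, hprim]
  rw [expConv.sub (hf.continuous_intervalIntegral a) (hg.continuous_intervalIntegral a)]
  ring

theorem hasDerivWithinAt (hf : ContinuousOn f (Icc a b)) {d : ℝ}
    (hd : HasDerivWithinAt f d (Icc a b) θ) (hθ : θ ∈ Icc a b) :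
    HasDerivWithinAt (volterraOp ε η a f)
      (d + η * ((1 / ε) * ((∫ s in a..θ, f s) -
        expConv ε a (fun s => ∫ σ in a..s, f σ) θ / ε))) (Icc a b) θ := by
  obtain ⟨g, hg, hgf⟩ := hf.exists_continuous_eqOn_Icc (hθ.1.trans hθ.2)
  have hprim : ∀ t ∈ Icc a b, ∫ s in a..t, f s = ∫ s in a..t, g s :=
    fun _ ht => intervalIntegral_eq_of_eqOn_Icc hgf.symm ht
  have hconv : ∀ t ∈ Icc a b, volterraOp ε η a f t =
      f t + η * ((1 / ε) * expConv ε a (fun s => ∫ σ in a..s, g σ) t) :=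
    fun _ ht => by rw [volterraOp, expConv.congr hprim ht]
  rw [hprim θ hθ, expConv.congr hprim hθ]
  exact (hd.add (((expConv.hasDerivAt (hg.continuous_intervalIntegral a) a θ).const_mul
    (1 / ε)).const_mul η).hasDerivWithinAt).congr hconv (hconv θ hθ)

theorem eqOn_zero_of_eqOn_zero (hu : Continuous u)
    (h : EqOn (volterraOp ε η a u) 0 (Icc a b)) : EqOn u 0 (Icc a b) := by
  set U := fun t => ∫ s in a..t, u s
  set V := expConv ε a U
  have hU : Continuous U := hu.continuous_intervalIntegral a
  have hu_eq : ∀ t ∈ Icc a b, u t = -(η * (1 / ε)) * V t := fun t ht => by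
    have := h ht
    simp only [volterraOp, Pi.zero_apply] at this
    linear_combination this
  set K := |η * (1 / ε)| + 1 + |1 / ε|
  have hF' : ∀ t, HasDerivAt (fun t => (U t, V t)) (u t, U t - V t / ε) t := fun t =>
    (hu.integral_hasStrictDerivAt a t).hasDerivAt.prodMk (expConv.hasDerivAt hU a t)
  have hF : ∀ t ∈ Icc a b, (U t, V t) = 0 := by
    refine eq_zero_of_abs_deriv_le_mul_abs_self_of_eq_zero_right (K := K)
      (fun t _ => (hF' t).continuousAt.continuousWithinAt) (fun t _ => (hF' t).hasDerivWithinAt)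
      (by simp [U, V, expConv]) fun t ht => ?_
    have hUF : |U t| ≤ ‖(U t, V t)‖ := norm_fst_le (U t, V t)
    have hVF : |V t| ≤ ‖(U t, V t)‖ := norm_snd_le (U t, V t)
    have hF0 := norm_nonneg (U t, V t)
    refine norm_prod_le_iff.2 ⟨?_, ?_⟩
    · rw [Real.norm_eq_abs, hu_eq t (Ico_subset_Icc_self ht), abs_mul, abs_neg]
      nlinarith [abs_nonneg (η * (1 / ε)), abs_nonneg (1 / ε)]
    · calc ‖U t - V t / ε‖ ≤ |U t| + |1 / ε| * |V t| := by
            rw [Real.norm_eq_abs, div_eq_mul_one_div, mul_comm, ← abs_mul]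
            exact abs_sub _ _
        _ ≤ K * ‖(U t, V t)‖ := by
            nlinarith [abs_nonneg (η * (1 / ε)), abs_nonneg (1 / ε)]
  intro t ht
  rw [hu_eq t ht, show V t = 0 from congrArg Prod.snd (hF t ht), mul_zero, Pi.zero_apply]

theorem eqOn_of_eqOn (hab : a ≤ b) (hf : ContinuousOn f (Icc a b)) (hg : ContinuousOn g (Icc a b))
    (h : EqOn (volterraOp ε η a f) (volterraOp ε η a g) (Icc a b)) : EqOn f g (Icc a b) := by
  obtain ⟨f', hf', hff'⟩ := hf.exists_continuous_eqOn_Icc hab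
  obtain ⟨g', hg', hgg'⟩ := hg.exists_continuous_eqOn_Icc hab
  have hzero : EqOn (fun s => f' s - g' s) 0 (Icc a b) := by
    refine eqOn_zero_of_eqOn_zero (ε := ε) (η := η) (hf'.sub hg') fun t ht => ?_
    rw [sub hf' hg', congr hff' ht, congr hgg' ht, h ht, sub_self, Pi.zero_apply]
  intro t ht
  rw [← hff' ht, ← hgg' ht]
  exact sub_eq_zero.1 (hzero ht)

end volterraOp

theorem stmt_5_general (ε η T : ℝ) (hT : 1 ≤ T)
    (φ1 φ2 : ℝ → ℝ) (d1 d2 : ℝ → ℝ)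
    (hφ1 : ∀ θ ∈ Set.Icc (-T) (0:ℝ), HasDerivWithinAt φ1 (d1 θ) (Set.Icc (-T) 0) θ)
    (hφ2 : ∀ θ ∈ Set.Icc (-T) (0:ℝ), HasDerivWithinAt φ2 (d2 θ) (Set.Icc (-T) 0) θ)
    (L1 L2 : ℝ → ℝ)
    (hL1 : ∀ θ, L1 θ = φ1 θ +
      η * ((1 / ε) * ∫ s in (-T)..θ, Real.exp (-(θ - s) / ε) * ∫ σ in (-T)..s, φ1 σ))
    (hL2 : ∀ θ, L2 θ = φ2 θ - η * ∫ s in (-T)..θ, φ1 s) :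
    -- the ODE satisfied by Lφ, with initial condition (Lφ)(-T) = φ(-T)
    (L1 (-T) = φ1 (-T) ∧ L2 (-T) = φ2 (-T)) ∧
    (∀ θ ∈ Set.Icc (-T) (0:ℝ),
      HasDerivWithinAt L1
        (-(1 / ε) * (L1 θ + L2 θ) + d1 θ + (1 / ε) * (φ1 θ + φ2 θ)) (Set.Icc (-T) 0) θ ∧
      HasDerivWithinAt L2 (d2 θ - η * φ1 θ) (Set.Icc (-T) 0) θ) ∧
    -- injectivity of L on C¹([-T,0], ℝ²)
    (∀ ψ1 ψ2 : ℝ → ℝ,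
      ContDiffOn ℝ 1 ψ1 (Set.Icc (-T) 0) → ContDiffOn ℝ 1 ψ2 (Set.Icc (-T) 0) →
      (∀ θ ∈ Set.Icc (-T) (0:ℝ),
        ψ1 θ + η * ((1 / ε) * ∫ s in (-T)..θ, Real.exp (-(θ - s) / ε) *
            ∫ σ in (-T)..s, ψ1 σ) = L1 θ ∧
        ψ2 θ - η * (∫ s in (-T)..θ, ψ1 s) = L2 θ) →
      ∀ θ ∈ Set.Icc (-T) (0:ℝ), ψ1 θ = φ1 θ ∧ ψ2 θ = φ2 θ) := by
  have hL1_eq : L1 = volterraOp ε η (-T) φ1 := funext hL1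
  have hφ1c : ContinuousOn φ1 (Icc (-T) 0) := fun θ hθ => (hφ1 θ hθ).continuousWithinAt
  refine ⟨⟨by simp [hL1], by simp [hL2]⟩, fun θ hθ => ⟨?_, ?_⟩, ?_⟩
  · rw [hL1_eq]
    refine (volterraOp.hasDerivWithinAt hφ1c (hφ1 θ hθ) hθ).congr_deriv ?_
    rw [hL2, volterraOp]
    ring
  · rw [funext hL2]
    exact (hφ2 θ hθ).sub
      ((hasDerivWithinAt_intervalIntegral_of_continuousOn hφ1c hθ).const_mul η)
  · intro ψ1 ψ2 hψ1 _ hψL θ hθ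
    have hψφ : EqOn ψ1 φ1 (Icc (-T) 0) :=
      volterraOp.eqOn_of_eqOn (by linarith) hψ1.continuousOn hφ1c
        fun t ht => (hψL t ht).1.trans (hL1 t)
    refine ⟨hψφ hθ, ?_⟩
    have h2 := (hψL θ hθ).2
    rw [hL2, intervalIntegral_eq_of_eqOn_Icc hψφ hθ] at h2
    linarith

theorem stmt_5 (ε η T : ℝ) (hε : 0 < ε) (hη : 0 < η) (hT : 1 ≤ T) (hT2 : T < 2)
    (φ1 φ2 : ℝ → ℝ) (d1 d2 : ℝ → ℝ)
    (hφ1 : ∀ θ ∈ Set.Icc (-T) (0:ℝ), HasDerivWithinAt φ1 (d1 θ) (Set.Icc (-T) 0) θ)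
    (hφ2 : ∀ θ ∈ Set.Icc (-T) (0:ℝ), HasDerivWithinAt φ2 (d2 θ) (Set.Icc (-T) 0) θ)
    (hd1 : ContinuousOn d1 (Set.Icc (-T) 0))
    (hd2 : ContinuousOn d2 (Set.Icc (-T) 0))
    (L1 L2 : ℝ → ℝ)
    (hL1 : ∀ θ, L1 θ = φ1 θ +
      η * ((1 / ε) * ∫ s in (-T)..θ, Real.exp (-(θ - s) / ε) * ∫ σ in (-T)..s, φ1 σ))
    (hL2 : ∀ θ, L2 θ = φ2 θ - η * ∫ s in (-T)..θ, φ1 s) :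
    -- the ODE satisfied by Lφ, with initial condition (Lφ)(-T) = φ(-T)
    (L1 (-T) = φ1 (-T) ∧ L2 (-T) = φ2 (-T)) ∧
    (∀ θ ∈ Set.Icc (-T) (0:ℝ),
      HasDerivWithinAt L1
        (-(1 / ε) * (L1 θ + L2 θ) + d1 θ + (1 / ε) * (φ1 θ + φ2 θ)) (Set.Icc (-T) 0) θ ∧
      HasDerivWithinAt L2 (d2 θ - η * φ1 θ) (Set.Icc (-T) 0) θ) ∧
    -- injectivity of L on C¹([-T,0], ℝ²)
    (∀ ψ1 ψ2 : ℝ → ℝ,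
      ContDiffOn ℝ 1 ψ1 (Set.Icc (-T) 0) → ContDiffOn ℝ 1 ψ2 (Set.Icc (-T) 0) →
      (∀ θ ∈ Set.Icc (-T) (0:ℝ),
        ψ1 θ + η * ((1 / ε) * ∫ s in (-T)..θ, Real.exp (-(θ - s) / ε) *
            ∫ σ in (-T)..s, ψ1 σ) = L1 θ ∧
        ψ2 θ - η * (∫ s in (-T)..θ, ψ1 s) = L2 θ) →
      ∀ θ ∈ Set.Icc (-T) (0:ℝ), ψ1 θ = φ1 θ ∧ ψ2 θ = φ2 θ) :=
  stmt_5_general ε η T hT φ1 φ2 d1 d2 hφ1 hφ2 L1 L2 hL1 hL2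
end

section
/- Derivative bound for L: with L as above, ‖(Lφ)′ − φ′‖_∞ ≤ 8η‖φ‖ for all φ ∈ C¹([−T,0], ℝ²). Hence the operator L − id is bounded in C¹-norm by a constant multiple of η. -/
/-!
Let `F` be the primitive of `φ¹` from `-T`, and let
`S h θ = (1/ε) ∫_{-T}^θ e^{-(θ-s)/ε} h(s) ds` be exponential smoothing, the solution of
`ε y' + y = h`, `y (-T) = 0`. Then `(Lφ)¹ = φ¹ + η S F` and `(Lφ)² = φ² - η F`. Integration
by parts gives `S F = F - ε S φ¹`, so `(S F)' = φ¹ - (φ¹ - S φ¹) = S φ¹`. Hence the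
derivatives of the two components of `Lφ - φ` are `η S φ¹` and `-η φ¹`, and both are bounded
by `η ‖φ‖` because the smoothing kernel has mass `1 - e^{-(θ+T)/ε} ≤ 1`.
-/

open MeasureTheory Set

noncomputable def expSmoothing (ε a : ℝ) (h : ℝ → ℝ) (θ : ℝ) : ℝ :=
  (1 / ε) * ∫ s in a..θ, Real.exp (-(θ - s) / ε) * h s

section

variable {ε a b θ M : ℝ} {f h : ℝ → ℝ}

theorem hasDerivWithinAt_integral_Icc (hf : ContinuousOn f (Icc a b)) (hθ : θ ∈ Icc a b) :
    HasDerivWithinAt (fun u => ∫ t in a..u, f t) (f θ) (Icc a b) θ := by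
  have : Fact (θ ∈ Icc a b) := ⟨hθ⟩
  refine intervalIntegral.integral_hasDerivWithinAt_right ?_ ?_ (hf θ hθ)
  · exact (hf.mono (by rw [uIcc_of_le hθ.1]; exact Icc_subset_Icc le_rfl hθ.2)).intervalIntegrable
  · exact hf.stronglyMeasurableAtFilter_nhdsWithin measurableSet_Icc θ

theorem expSmoothing_eq_exp_mul_integral (ε a : ℝ) (h : ℝ → ℝ) (θ : ℝ) :
    expSmoothing ε a h θ
      = (1 / ε) * (Real.exp (-θ / ε) * ∫ s in a..θ, Real.exp (s / ε) * h s) := by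
  rw [expSmoothing, ← intervalIntegral.integral_const_mul (Real.exp (-θ / ε))]
  refine congrArg _ (intervalIntegral.integral_congr fun s _ => ?_)
  rw [← mul_assoc, ← Real.exp_add]
  ring_nf

theorem hasDerivWithinAt_expSmoothing (hh : ContinuousOn h (Icc a b))
    (hθ : θ ∈ Icc a b) :
    HasDerivWithinAt (expSmoothing ε a h) ((h θ - expSmoothing ε a h θ) / ε) (Icc a b) θ := by
  have hexp : HasDerivAt (fun u => Real.exp (-u / ε)) (Real.exp (-θ / ε) * (-1 / ε)) θ := by
    simpa [neg_div] using ((hasDerivAt_id θ).neg.div_const ε).exp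
  have hint := hasDerivWithinAt_integral_Icc (f := fun s => Real.exp (s / ε) * h s)
    ((Real.continuous_exp.comp (continuous_id.div_const ε)).continuousOn.mul hh) hθ
  rw [funext (expSmoothing_eq_exp_mul_integral ε a h)]
  refine ((hexp.hasDerivWithinAt.mul hint).const_mul (1 / ε)).congr_deriv ?_
  beta_reduce
  have hexp_cancel : Real.exp (-θ / ε) * Real.exp (θ / ε) = 1 := by
    rw [← Real.exp_add, neg_div, neg_add_cancel, Real.exp_zero]
  rw [← mul_assoc (Real.exp (-θ / ε)), hexp_cancel, one_mul]
  ring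

theorem hasDerivAt_mul_exp_neg_sub_div (hε : ε ≠ 0) (θ x : ℝ) :
    HasDerivAt (fun s => ε * Real.exp (-(θ - s) / ε)) (Real.exp (-(θ - x) / ε)) x := by
  have := (((hasDerivAt_id x).sub_const θ).div_const ε).exp.const_mul ε
  simp only [id, ← neg_sub θ] at this
  exact this.congr_deriv (by field_simp)

theorem expSmoothing_integral (hε : ε ≠ 0) (haθ : a ≤ θ) (hf : ContinuousOn f (Icc a θ)) :
    expSmoothing ε a (fun s => ∫ t in a..s, f t) θ
      = (∫ t in a..θ, f t) - ε * expSmoothing ε a f θ := by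
  have hprim : ∀ x ∈ uIcc a θ,
      HasDerivWithinAt (fun s => ∫ t in a..s, f t) (f x) (uIcc a θ) x := by
    rw [uIcc_of_le haθ]
    exact fun x hx => hasDerivWithinAt_integral_Icc hf hx
  have hparts := intervalIntegral.integral_mul_deriv_eq_deriv_mul_of_hasDerivWithinAt
    (fun x _ => (hasDerivAt_mul_exp_neg_sub_div hε θ x).hasDerivWithinAt) hprim
    ((by fun_prop : Continuous fun x => Real.exp (-(θ - x) / ε)).intervalIntegrable a θ)
    ((uIcc_of_le haθ ▸ hf).intervalIntegrable)
  simp only [intervalIntegral.integral_same, mul_zero, sub_zero, sub_self, neg_zero, zero_div,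
    Real.exp_zero, mul_one, mul_assoc, intervalIntegral.integral_const_mul] at hparts
  rw [expSmoothing, expSmoothing]
  field_simp at hparts ⊢
  linarith

theorem hasDerivWithinAt_expSmoothing_integral (hε : ε ≠ 0) (hf : ContinuousOn f (Icc a b))
    (hθ : θ ∈ Icc a b) :
    HasDerivWithinAt (expSmoothing ε a (fun s => ∫ t in a..s, f t)) (expSmoothing ε a f θ)
      (Icc a b) θ := by
  have hsub : ∀ {x}, x ∈ Icc a b → Icc a x ⊆ Icc a b := fun hx => Icc_subset_Icc le_rfl hx.2
  have hsplit := (hasDerivWithinAt_integral_Icc hf hθ).sub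
    ((hasDerivWithinAt_expSmoothing (ε := ε) hf hθ).const_mul ε)
  refine (hsplit.congr (fun x hx => expSmoothing_integral hε hx.1 (hf.mono (hsub hx)))
    (expSmoothing_integral hε hθ.1 (hf.mono (hsub hθ)))).congr_deriv ?_
  field_simp
  ring

theorem integral_exp_neg_sub_div (hε : ε ≠ 0) (a θ : ℝ) :
    ∫ s in a..θ, Real.exp (-(θ - s) / ε) = ε * (1 - Real.exp (-(θ - a) / ε)) := by
  rw [intervalIntegral.integral_eq_sub_of_hasDerivAt
    (fun x _ => hasDerivAt_mul_exp_neg_sub_div hε θ x)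
    ((by fun_prop : Continuous fun x => Real.exp (-(θ - x) / ε)).intervalIntegrable a θ)]
  simp only [sub_self, neg_zero, zero_div, Real.exp_zero]
  ring

theorem abs_expSmoothing_le (hε : 0 < ε) (haθ : a ≤ θ) (hM : ∀ s ∈ Icc a θ, |h s| ≤ M) :
    |expSmoothing ε a h θ| ≤ M := by
  have hM0 : 0 ≤ M := (abs_nonneg _).trans (hM a ⟨le_rfl, haθ⟩)
  have hint : ‖∫ s in a..θ, Real.exp (-(θ - s) / ε) * h s‖
      ≤ ∫ s in a..θ, M * Real.exp (-(θ - s) / ε) := by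
    refine intervalIntegral.norm_integral_le_of_norm_le haθ (ae_of_all _ fun s hs => ?_)
      ((by fun_prop : Continuous fun s => M * Real.exp (-(θ - s) / ε)).intervalIntegrable a θ)
    rw [Real.norm_eq_abs, abs_mul, Real.abs_exp, mul_comm]
    exact mul_le_mul_of_nonneg_right (hM s (Ioc_subset_Icc_self hs)) (Real.exp_pos _).le
  rw [Real.norm_eq_abs, intervalIntegral.integral_const_mul,
    integral_exp_neg_sub_div hε.ne'] at hint
  rw [expSmoothing, abs_mul, abs_of_pos (one_div_pos.mpr hε)]
  calc 1 / ε * |∫ s in a..θ, Real.exp (-(θ - s) / ε) * h s|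
      ≤ 1 / ε * (M * (ε * (1 - Real.exp (-(θ - a) / ε)))) := by gcongr
    _ = M - M * Real.exp (-(θ - a) / ε) := by field_simp
    _ ≤ M := by nlinarith [Real.exp_pos (-(θ - a) / ε)]

end

theorem stmt_6_general (ε η T : ℝ) (hε : 0 < ε) (hη : 0 < η) (hT : 1 ≤ T)
    (φ1 φ2 : ℝ → ℝ) (d1 d2 : ℝ → ℝ)
    (hφ1 : ∀ θ ∈ Set.Icc (-T) (0:ℝ), HasDerivWithinAt φ1 (d1 θ) (Set.Icc (-T) 0) θ)
    (hφ2 : ∀ θ ∈ Set.Icc (-T) (0:ℝ), HasDerivWithinAt φ2 (d2 θ) (Set.Icc (-T) 0) θ)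
    (N : ℝ)
    (hN : N = sSup ((fun θ => ‖(φ1 θ, φ2 θ)‖) '' Set.Icc (-T) 0))
    (L1 L2 : ℝ → ℝ)
    (hL1 : ∀ θ, L1 θ = φ1 θ +
      η * ((1 / ε) * ∫ s in (-T)..θ, Real.exp (-(θ - s) / ε) * ∫ σ in (-T)..s, φ1 σ))
    (hL2 : ∀ θ, L2 θ = φ2 θ - η * ∫ s in (-T)..θ, φ1 s)
    (g1 g2 : ℝ → ℝ)
    (hg1 : ∀ θ ∈ Set.Icc (-T) (0:ℝ), HasDerivWithinAt L1 (g1 θ) (Set.Icc (-T) 0) θ)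
    (hg2 : ∀ θ ∈ Set.Icc (-T) (0:ℝ), HasDerivWithinAt L2 (g2 θ) (Set.Icc (-T) 0) θ) :
    ∀ θ ∈ Set.Icc (-T) (0:ℝ), ‖(g1 θ - d1 θ, g2 θ - d2 θ)‖ ≤ 8 * η * N := by
  intro θ hθ
  have hunique : UniqueDiffWithinAt ℝ (Icc (-T) 0) θ := uniqueDiffOn_Icc (by linarith) θ hθ
  have hcont1 : ContinuousOn φ1 (Icc (-T) 0) := fun x hx => (hφ1 x hx).continuousWithinAt
  have hcont2 : ContinuousOn φ2 (Icc (-T) 0) := fun x hx => (hφ2 x hx).continuousWithinAt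
  have hbound : ∀ x ∈ Icc (-T) 0, |φ1 x| ≤ N := fun x hx =>
    hN ▸ (norm_fst_le _).trans (le_csSup
      (isCompact_Icc.bddAbove_image (hcont1.prodMk hcont2).norm) (mem_image_of_mem _ hx))
  have hdiff1 : g1 θ - d1 θ = η * expSmoothing ε (-T) φ1 θ := by
    have hL1' : HasDerivWithinAt L1 (d1 θ + η * expSmoothing ε (-T) φ1 θ) (Icc (-T) 0) θ := by
      rw [funext hL1]
      exact (hφ1 θ hθ).add
        ((hasDerivWithinAt_expSmoothing_integral hε.ne' hcont1 hθ).const_mul η)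
    rw [hunique.eq_deriv _ (hg1 θ hθ) hL1']
    ring
  have hdiff2 : g2 θ - d2 θ = -(η * φ1 θ) := by
    have hL2' : HasDerivWithinAt L2 (d2 θ - η * φ1 θ) (Icc (-T) 0) θ := by
      rw [funext hL2]
      exact (hφ2 θ hθ).sub ((hasDerivWithinAt_integral_Icc hcont1 hθ).const_mul η)
    rw [hunique.eq_deriv _ (hg2 θ hθ) hL2']
    ring
  have hηN : η * N ≤ 8 * η * N := by nlinarith [(abs_nonneg _).trans (hbound θ hθ)]
  rw [Prod.norm_mk, hdiff1, hdiff2, norm_neg, Real.norm_eq_abs, Real.norm_eq_abs, abs_mul,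
    abs_mul, abs_of_pos hη]
  refine max_le ((mul_le_mul_of_nonneg_left ?_ hη.le).trans hηN)
    ((mul_le_mul_of_nonneg_left (hbound θ hθ) hη.le).trans hηN)
  exact abs_expSmoothing_le hε hθ.1 fun s hs => hbound s ⟨hs.1, hs.2.trans hθ.2⟩

theorem stmt_6 (ε η T : ℝ) (hε : 0 < ε) (hη : 0 < η) (hT : 1 ≤ T) (hT2 : T < 2)
    (φ1 φ2 : ℝ → ℝ) (d1 d2 : ℝ → ℝ)
    (hφ1 : ∀ θ ∈ Set.Icc (-T) (0:ℝ), HasDerivWithinAt φ1 (d1 θ) (Set.Icc (-T) 0) θ)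
    (hφ2 : ∀ θ ∈ Set.Icc (-T) (0:ℝ), HasDerivWithinAt φ2 (d2 θ) (Set.Icc (-T) 0) θ)
    (N : ℝ)
    (hN : N = sSup ((fun θ => ‖(φ1 θ, φ2 θ)‖) '' Set.Icc (-T) 0))
    (L1 L2 : ℝ → ℝ)
    (hL1 : ∀ θ, L1 θ = φ1 θ +
      η * ((1 / ε) * ∫ s in (-T)..θ, Real.exp (-(θ - s) / ε) * ∫ σ in (-T)..s, φ1 σ))
    (hL2 : ∀ θ, L2 θ = φ2 θ - η * ∫ s in (-T)..θ, φ1 s)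
    (g1 g2 : ℝ → ℝ)
    (hg1 : ∀ θ ∈ Set.Icc (-T) (0:ℝ), HasDerivWithinAt L1 (g1 θ) (Set.Icc (-T) 0) θ)
    (hg2 : ∀ θ ∈ Set.Icc (-T) (0:ℝ), HasDerivWithinAt L2 (g2 θ) (Set.Icc (-T) 0) θ) :
    ∀ θ ∈ Set.Icc (-T) (0:ℝ), ‖(g1 θ - d1 θ, g2 θ - d2 θ)‖ ≤ 8 * η * N :=
  stmt_6_general ε η T hε hη hT φ1 φ2 d1 d2 hφ1 hφ2 N hN L1 L2 hL1 hL2 g1 g2 hg1 hg2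
end
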